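/- Let H be a real Hilbert space, L : H → ℝ continuously differentiable with gradient ∇L, and ℓ : [a,b] → H continuously differentiable with ℓ'(t) = -∇L(ℓ(t)) and ∇L(ℓ(t)) ≠ 0 for all t ∈ [a,b]. Suppose 𝒯 : ℝ → (0,∞) is continuous and satisfies ‖∇L(ℓ(t))‖ ≥ 𝒯(L(ℓ(t))) for all t ∈ [a,b]. Then the length of ℓ satisfies ∫_a^b ‖ℓ'(t)‖ dt ≤ ∫_{L(ℓ(b))}^{L(ℓ(a))} (1/𝒯(w)) dw. -/

import Mathlib

/-!
Along a gradient flow line the energy `L ∘ ℓ` has derivative `-‖ℓ'‖²`, so the hypothesis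
`𝒯 (L ∘ ℓ) ≤ ‖∇L ∘ ℓ‖ = ‖ℓ'‖` gives `‖ℓ'‖ ≤ -(L ∘ ℓ)' / 𝒯 (L ∘ ℓ)`. Integrating over `[a, b]` and
substituting `w = L (ℓ t)` on the right turns the bound into `∫ 1 / 𝒯` over the energy interval.
-/

open MeasureTheory

theorem integral_le_integral_one_div_of_mul_le_neg_deriv {f g T : ℝ → ℝ} {a b : ℝ} (hab : a ≤ b)
    (hf : IntervalIntegrable f volume a b) (hg : ContDiff ℝ 1 g) (hT : Continuous T)
    (hTpos : ∀ w, 0 < T w) (h : ∀ t ∈ Set.Icc a b, f t * T (g t) ≤ -deriv g t) :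
    ∫ t in a..b, f t ≤ ∫ w in g b..g a, 1 / T w := by
  have hg' : Continuous (deriv g) := hg.continuous_deriv le_rfl
  have hinv : Continuous fun w => 1 / T w := continuous_const.div hT fun w => (hTpos w).ne'
  have hsubst : ∫ w in g b..g a, 1 / T w = ∫ t in a..b, -deriv g t / T (g t) := by
    rw [intervalIntegral.integral_symm,
      ← intervalIntegral.integral_comp_mul_deriv
        (fun t _ => (hg.differentiable one_ne_zero t).hasDerivAt) hg'.continuousOn hinv,
      ← intervalIntegral.integral_neg]
    simp only [Function.comp_apply, neg_div, one_div_mul_eq_div]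
  rw [hsubst]
  refine intervalIntegral.integral_mono_on hab hf ?_ fun t ht => ?_
  · exact (hg'.neg.div (hT.comp hg.continuous) fun t => (hTpos _).ne').intervalIntegrable a b
  · exact (le_div_iff₀ (hTpos _)).2 (h t ht)

theorem deriv_comp_eq_neg_norm_sq_of_gradient_flow {H : Type*} [NormedAddCommGroup H]
    [InnerProductSpace ℝ H] {L : H → ℝ} {gradL : H → H} {ℓ : ℝ → H} {t : ℝ}
    (hL : DifferentiableAt ℝ L (ℓ t)) (hℓ : DifferentiableAt ℝ ℓ t)
    (hgrad : ∀ v, fderiv ℝ L (ℓ t) v = inner ℝ (gradL (ℓ t)) v)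
    (hflow : deriv ℓ t = -gradL (ℓ t)) :
    deriv (L ∘ ℓ) t = -‖deriv ℓ t‖ ^ 2 := by
  rw [fderiv_comp_deriv t hL hℓ, hgrad, hflow, inner_neg_right,
    real_inner_self_eq_norm_sq, norm_neg]

theorem stmt_9_general {H : Type*} [NormedAddCommGroup H] [InnerProductSpace ℝ H]
    (L : H → ℝ) (hL : ContDiff ℝ 1 L) (gradL : H → H)
    (hgrad : ∀ x v, fderiv ℝ L x v = (inner ℝ (gradL x) v : ℝ))
    (a b : ℝ) (hab : a ≤ b)
    (ℓ : ℝ → H) (hℓ : ContDiff ℝ 1 ℓ)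
    (hflow : ∀ t ∈ Set.Icc a b, deriv ℓ t = -gradL (ℓ t))
    (𝒯 : ℝ → ℝ) (h𝒯cont : Continuous 𝒯) (h𝒯pos : ∀ w, 0 < 𝒯 w)
    (h𝒯 : ∀ t ∈ Set.Icc a b, 𝒯 (L (ℓ t)) ≤ ‖gradL (ℓ t)‖) :
    ∫ t in a..b, ‖deriv ℓ t‖ ≤ ∫ w in (L (ℓ b))..(L (ℓ a)), 1 / 𝒯 w := by
  have hspeed : IntervalIntegrable (fun t => ‖deriv ℓ t‖) volume a b :=
    (hℓ.continuous_deriv le_rfl).norm.intervalIntegrable a b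
  refine integral_le_integral_one_div_of_mul_le_neg_deriv hab hspeed (hL.comp hℓ) h𝒯cont h𝒯pos
    fun t ht => ?_
  rw [deriv_comp_eq_neg_norm_sq_of_gradient_flow (hL.differentiable one_ne_zero _)
    (hℓ.differentiable one_ne_zero t) (hgrad _) (hflow t ht), neg_neg, sq]
  have h𝒯t : 𝒯 (L (ℓ t)) ≤ ‖deriv ℓ t‖ := by
    rw [hflow t ht, norm_neg]
    exact h𝒯 t ht
  exact mul_le_mul_of_nonneg_left h𝒯t (norm_nonneg _)

/-- Abbondandolo–Majer length estimate: the length of a negative gradient flow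
line is bounded by the integral of `1/𝒯` over the traversed energy interval. -/
theorem stmt_9 {H : Type*} [NormedAddCommGroup H] [InnerProductSpace ℝ H]
    [CompleteSpace H]
    (L : H → ℝ) (hL : ContDiff ℝ 1 L) (gradL : H → H)
    (hgrad : ∀ x v, fderiv ℝ L x v = (inner ℝ (gradL x) v : ℝ))
    (a b : ℝ) (hab : a ≤ b)
    (ℓ : ℝ → H) (hℓ : ContDiff ℝ 1 ℓ)
    (hflow : ∀ t ∈ Set.Icc a b, deriv ℓ t = -gradL (ℓ t))
    (hne : ∀ t ∈ Set.Icc a b, gradL (ℓ t) ≠ 0)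
    (𝒯 : ℝ → ℝ) (h𝒯cont : Continuous 𝒯) (h𝒯pos : ∀ w, 0 < 𝒯 w)
    (h𝒯 : ∀ t ∈ Set.Icc a b, 𝒯 (L (ℓ t)) ≤ ‖gradL (ℓ t)‖) :
    ∫ t in a..b, ‖deriv ℓ t‖ ≤ ∫ w in (L (ℓ b))..(L (ℓ a)), 1 / 𝒯 w :=
  stmt_9_general L hL gradL hgrad a b hab ℓ hℓ hflow 𝒯 h𝒯cont h𝒯pos h𝒯
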